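/- Let α : ℕ → S be a trajectory of a finite-state control system that eventually cycles along a simple minimum-mean cycle C* of the constrained transition graph, with per-step costs chosen minimally along the cycle. Then for any admissible trajectory that eventually stays in Φ, its long-run average cost (limit of (1/K)Σ_{k<K} g(α(k),u(k))) is at least the mean weight w̄(C*) of the minimum-mean cycle, so the limiting average cost w̄(C*) is optimal. -/

import Mathlib

open Filter

def AdmissibleTraj {S U : Type*} (C : S → Set U) (f : S → U → S)
    (α : ℕ → S) (u : ℕ → U) : Prop :=
  ∀ k, u k ∈ C (α k) ∧ α (k + 1) = f (α k) (u k)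

def IsCycle {V : Type*} (E : V → V → Prop) (c : List V) : Prop :=
  2 ≤ c.length ∧ c.Chain' E ∧ c.head? = c.getLast?

def walkWeight {V : Type*} (w : V → V → ℝ) (c : List V) : ℝ :=
  ((c.zip c.tail).map (fun p => w p.1 p.2)).sum

noncomputable def meanWeight {V : Type*} (w : V → V → ℝ) (c : List V) : ℝ :=
  walkWeight w c / ((c.length : ℝ) - 1)

/-- The edge relation of the constrained transition graph `G[Φ]`. -/
def GraphEdge {S U : Type*} (C : S → Set U) (f : S → U → S) (Φ : Set S)
    (a b : S) : Prop :=
  a ∈ Φ ∧ b ∈ Φ ∧ ∃ u ∈ C a, f a u = b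


lemma walkWeight_cons_cons {V : Type*} (w : V → V → ℝ) (a b : V) (t : List V) :
    walkWeight w (a :: b :: t) = w a b + walkWeight w (b :: t) := by
  simp [walkWeight]

lemma walkWeight_map_range {V : Type*} (w : V → V → ℝ) :
    ∀ (N : ℕ) (β : ℕ → V), walkWeight w ((List.range (N+1)).map β)
      = ∑ i ∈ Finset.range N, w (β i) (β (i+1)) := by
  intro N
  induction N with
  | zero => intro β; simp [walkWeight, List.range_succ]
  | succ N ih =>
    intro β
    have h2 : (List.range (N+2)).map β
        = β 0 :: (List.range (N+1)).map (fun i => β (i+1)) := by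
      rw [List.range_succ_eq_map]
      simp [Function.comp, Nat.succ_eq_add_one]
    have h3 : (List.range (N+1)).map (fun i => β (i+1))
        = β 1 :: (List.range N).map (fun i => β (i+2)) := by
      rw [List.range_succ_eq_map]
      simp [Function.comp, Nat.succ_eq_add_one]
    rw [h2, h3, walkWeight_cons_cons, ← h3, ih (fun i => β (i+1)),
        Finset.sum_range_succ']
    ring

/-- Any admissible trajectory eventually staying in `Φ` whose long-run average stage cost
converges has limiting average cost at least the minimum cycle mean `ε` of `G[Φ]`. -/
theorem average_cost_ge_min_mean_cycle {S U : Type*} [Fintype S]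
    (C : S → Set U) (f : S → U → S) (g : S → U → ℝ) (Φ : Set S)
    (w : S → S → ℝ)
    (hw : ∀ a b, GraphEdge C f Φ a b →
      w a b = sInf {x : ℝ | ∃ u ∈ C a, f a u = b ∧ g a u = x} ∧
      (∀ u ∈ C a, f a u = b → w a b ≤ g a u))
    (ε : ℝ)
    (hε : ∀ c, IsCycle (GraphEdge C f Φ) c → ε ≤ meanWeight w c)
    (α : ℕ → S) (u : ℕ → U) (hadm : AdmissibleTraj C f α u)
    (K0 : ℕ) (hΦ : ∀ k ≥ K0, α k ∈ Φ)
    (L : ℝ)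
    (hlim : Tendsto (fun K : ℕ => (∑ k ∈ Finset.range K, g (α k) (u k)) / K)
      atTop (nhds L)) :
    ε ≤ L := by
  classical
  -- edges along the trajectory after time K0
  have hedge : ∀ k, K0 ≤ k → GraphEdge C f Φ (α k) (α (k+1)) := by
    intro k hk
    exact ⟨hΦ k hk, hΦ (k+1) (le_trans hk (Nat.le_succ k)), u k, (hadm k).1, (hadm k).2.symm⟩
  have hwle : ∀ k, K0 ≤ k → w (α k) (α (k+1)) ≤ g (α k) (u k) := by
    intro k hk
    exact (hw _ _ (hedge k hk)).2 (u k) (hadm k).1 (hadm k).2.symm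
  -- pigeonhole: some state s recurs infinitely often after K0
  obtain ⟨s, hs⟩ := Finite.exists_infinite_fiber (fun n : ℕ => α (K0 + n))
  have hs' : ((fun n : ℕ => α (K0 + n)) ⁻¹' {s}).Infinite := Set.infinite_coe_iff.mp hs
  have hT : {n : ℕ | K0 ≤ n ∧ α n = s}.Infinite := by
    have himg : ((fun n => K0 + n) '' ((fun n : ℕ => α (K0 + n)) ⁻¹' {s})).Infinite :=
      hs'.image (Function.Injective.injOn (fun a b h => by omega))
    refine himg.mono ?_
    rintro m ⟨n, hn, rfl⟩
    exact ⟨Nat.le_add_right _ _, hn⟩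
  obtain ⟨m0, hm0⟩ := hT.nonempty
  -- key segment bound: every return to s costs at least ε per step
  have key : ∀ n, K0 ≤ n → α n = s → m0 < n →
      ε * ((n - m0 : ℕ) : ℝ) ≤ ∑ k ∈ Finset.Ico m0 n, g (α k) (u k) := by
    intro n _hn hns hmn
    set N := n - m0 with hNdef
    have hN : 0 < N := Nat.sub_pos_of_lt hmn
    have hmN : m0 + N = n := by omega
    set β : ℕ → S := fun i => α (m0 + i) with hβ
    set c : List S := (List.range (N+1)).map β with hc
    have hcyc : IsCycle (GraphEdge C f Φ) c := by
      refine ⟨?_, ?_, ?_⟩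
      · simp [hc]; omega
      · rw [hc, List.Chain', List.isChain_map, List.isChain_range_succ]
        intro m hm
        have : β m.succ = α ((m0 + m) + 1) := by simp [hβ]; ring_nf
        rw [this]
        exact hedge (m0 + m) (le_trans hm0.1 (Nat.le_add_right _ _))
      · have hhead : c.head? = some (β 0) := by
          rw [hc, List.range_succ_eq_map]; simp
        have hlast : c.getLast? = some (β N) := by
          rw [hc, List.range_succ, List.map_append]
          simp [List.getLast?_concat]
        rw [hhead, hlast]
        simp only [hβ, Nat.add_zero, hmN, hns, hm0.2]
    have hmean := hε c hcyc
    have hlen : ((c.length : ℝ) - 1) = (N : ℝ) := by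
      simp [hc]
    have hNpos : (0 : ℝ) < (N : ℝ) := by exact_mod_cast hN
    rw [meanWeight, hlen, le_div_iff₀ hNpos] at hmean
    have hww : walkWeight w c = ∑ i ∈ Finset.range N, w (β i) (β (i+1)) :=
      walkWeight_map_range w N β
    have hsum : ∑ i ∈ Finset.range N, w (β i) (β (i+1))
        ≤ ∑ i ∈ Finset.range N, g (α (m0 + i)) (u (m0 + i)) := by
      refine Finset.sum_le_sum ?_
      intro i _
      have : β (i+1) = α ((m0 + i) + 1) := by simp [hβ]; ring_nf
      rw [this]
      exact hwle (m0 + i) (le_trans hm0.1 (Nat.le_add_right _ _))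
    rw [Finset.sum_Ico_eq_sum_range]
    calc ε * ((N : ℕ) : ℝ) ≤ walkWeight w c := hmean
      _ = ∑ i ∈ Finset.range N, w (β i) (β (i+1)) := hww
      _ ≤ ∑ i ∈ Finset.range (n - m0), g (α (m0 + i)) (u (m0 + i)) := hsum
  -- conclude by contradiction
  by_contra hL
  push_neg at hL
  set B : ℝ := ∑ k ∈ Finset.range m0, g (α k) (u k) with hB
  have hmid : L < (L + ε) / 2 := by linarith
  have hmid2 : (L + ε) / 2 < ε := by linarith
  have hev1 : ∀ᶠ K : ℕ in atTop,
      (∑ k ∈ Finset.range K, g (α k) (u k)) / K < (L + ε) / 2 :=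
    hlim.eventually_lt_const hmid
  have haux : Tendsto (fun n : ℕ => ε + (B - ε * m0) / n) atTop (nhds ε) := by
    have := (tendsto_const_div_atTop_nhds_zero_nat (B - ε * m0)).const_add ε
    simpa using this
  have hev2 : ∀ᶠ n : ℕ in atTop, (L + ε) / 2 < ε + (B - ε * m0) / n :=
    haux.eventually_const_lt hmid2
  have hfreq : ∃ᶠ n : ℕ in atTop, K0 ≤ n ∧ α n = s :=
    Nat.frequently_atTop_iff_infinite.mpr hT
  obtain ⟨n, ⟨hnK0, hns⟩, hlt1, hlt2, hnm0⟩ :=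
    (hfreq.and_eventually (hev1.and (hev2.and (eventually_gt_atTop m0)))).exists
  have hnpos : (0 : ℝ) < (n : ℝ) := by
    have : 0 < n := Nat.lt_of_le_of_lt (Nat.zero_le m0) hnm0
    exact_mod_cast this
  have hsplit : ∑ k ∈ Finset.range n, g (α k) (u k)
      = B + ∑ k ∈ Finset.Ico m0 n, g (α k) (u k) := by
    rw [hB]
    simp only [Finset.range_eq_Ico]
    exact (Finset.sum_Ico_consecutive _ (Nat.zero_le m0) (le_of_lt hnm0)).symm
  have hkey := key n hnK0 hns hnm0
  have hcast : ((n - m0 : ℕ) : ℝ) = (n : ℝ) - (m0 : ℝ) := by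
    push_cast [Nat.cast_sub (le_of_lt hnm0)]; ring
  rw [hcast] at hkey
  have hlow : ε + (B - ε * m0) / n ≤ (∑ k ∈ Finset.range n, g (α k) (u k)) / n := by
    rw [hsplit]
    have h2 : ε + (B - ε * m0) / n = (B + ε * ((n:ℝ) - m0)) / n := by
      field_simp
      ring
    rw [h2]
    gcongr
  linarith [hlow, hlt1, hlt2]
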